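/- Let A be a complete discrete valuation ring (complete with respect to its maximal-ideal-adic topology) with maximal ideal 𝔭 and fraction field k. Let M be a finite separable extension of k that is unramified over A, let B be the integral closure of A in M (a discrete valuation ring), and let 𝔪 be the maximal ideal of B, so that e(𝔪/𝔭) = 1. Suppose there is α ∈ B such that M = k(α) and the reduction modulo 𝔭 of the minimal polynomial g ∈ A[x] of α over k has no repeated roots in an algebraic closure of A/𝔭. Then B = A[α], i.e., B equals the A-subalgebra of M generated by α. -/

import Mathlib

/-!
Let `g` be the minimal polynomial of `α` over `A` and `d ∈ A` the discriminant of the basis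
`1, X, …, X^(n-1)` of `A[X]/(g)`. Traces on `A[X]/(g)` are computed from the coefficients of `g`,
so `d` reduces mod `𝔭` to the same discriminant for `ḡ`. Over an algebraic closure, `A[X]/(ḡ)` is
the product of one copy of the field per root, so that discriminant is the square of the
Vandermonde determinant of the roots, nonzero since `ḡ` is separable. Hence `d` is a unit, and
the classical bound `d • B ⊆ A[α]` gives `B = A[α]`.
-/

open Polynomial

theorem Algebra.trace_pi_eq_sum {R ι : Type*} [CommRing R] [Fintype ι] (v : ι → R) :
    Algebra.trace R (ι → R) v = ∑ i, v i := by
  classical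
  rw [Algebra.trace_eq_matrix_trace (Pi.basisFun R ι) v, Matrix.trace]
  refine Finset.sum_congr rfl fun i _ => ?_
  simp [Algebra.leftMulMatrix_eq_repr_mul]

namespace AdjoinRoot

variable {R S : Type*} [CommRing R] [CommRing S]

noncomputable def discr (g : R[X]) : R :=
  Algebra.discr R fun i : Fin g.natDegree => root g ^ (i : ℕ)

theorem trace_mk {g : R[X]} (hg : g.Monic) (Q : R[X]) :
    Algebra.trace R (AdjoinRoot g) (mk g Q) =
      ∑ i ∈ Finset.range g.natDegree, (Q * X ^ i %ₘ g).coeff i := by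
  rw [Algebra.trace_eq_matrix_trace (powerBasis' hg).basis, Matrix.trace,
    ← Fin.sum_univ_eq_sum_range (fun i => (Q * X ^ i %ₘ g).coeff i)]
  refine Finset.sum_congr rfl fun i _ => ?_
  rw [Matrix.diag, Algebra.leftMulMatrix_eq_repr_mul, (powerBasis' hg).basis_eq_pow,
    powerBasis'_gen, ← mk_X, ← map_pow, ← map_mul]
  rfl

theorem map_trace_mk [Nontrivial S] (h : R →+* S) {g : R[X]} (hg : g.Monic) (Q : R[X]) :
    h (Algebra.trace R (AdjoinRoot g) (mk g Q)) =
      Algebra.trace S (AdjoinRoot (g.map h)) (mk (g.map h) (Q.map h)) := by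
  simp only [trace_mk hg, trace_mk (hg.map h), map_sum, hg.natDegree_map, ← coeff_map,
    map_modByMonic h hg, Polynomial.map_mul, Polynomial.map_pow, map_X]

theorem map_trace_root_pow [Nontrivial S] (h : R →+* S) {g : R[X]} (hg : g.Monic) (m : ℕ) :
    h (Algebra.trace R (AdjoinRoot g) (root g ^ m)) =
      Algebra.trace S (AdjoinRoot (g.map h)) (root (g.map h) ^ m) := by
  simpa only [← mk_X, ← map_pow, Polynomial.map_pow, map_X] using map_trace_mk h hg (X ^ m)

theorem map_discr [Nontrivial S] (h : R →+* S) {g : R[X]} (hg : g.Monic) :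
    h (discr g) = discr (g.map h) := by
  have hdeg : (g.map h).natDegree = g.natDegree := hg.natDegree_map h
  rw [discr, discr, Algebra.discr_def, Algebra.discr_def, RingHom.map_det,
    ← Matrix.det_submatrix_equiv_self (finCongr hdeg)]
  congr 1
  ext i j
  simp only [Matrix.submatrix_apply, RingHom.mapMatrix_apply, Matrix.map_apply,
    Algebra.traceMatrix_apply, Algebra.traceForm_apply, ← pow_add, map_trace_root_pow h hg,
    finCongr_apply, Fin.val_cast]

section SplitSeparable

variable {K : Type*} [Field K] {f : K[X]} {ι : Type*} {ρ : ι → K}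

noncomputable def evalAtRoots (hρ : ∀ i, f.IsRoot (ρ i)) : AdjoinRoot f →ₐ[K] ι → K :=
  AlgHom.pi fun i => liftAlgHom f (Algebra.ofId K K) (ρ i) (hρ i)

theorem evalAtRoots_mk (hρ : ∀ i, f.IsRoot (ρ i)) (P : K[X]) :
    evalAtRoots hρ (mk f P) = fun i => P.eval (ρ i) :=
  rfl

theorem evalAtRoots_bijective [Fintype ι] (hρ : ∀ i, f.IsRoot (ρ i)) (hf : f.Monic)
    (hinj : Function.Injective ρ) (hcard : Fintype.card ι = f.natDegree) :
    Function.Bijective (evalAtRoots hρ) := by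
  have hinj' : Function.Injective (evalAtRoots hρ) := by
    rw [injective_iff_map_eq_zero]
    intro x hx
    obtain ⟨P, rfl⟩ := mk_surjective x
    have hPf : ∀ i, (P %ₘ f).eval (ρ i) = 0 := fun i => by
      simpa [modByMonic_eq_sub_mul_div P f, (hρ i).eq_zero, evalAtRoots_mk] using congrFun hx i
    suffices P %ₘ f = 0 by rwa [mk_eq_zero, ← modByMonic_eq_zero_iff_dvd hf]
    by_contra hne
    refine hne (eq_zero_of_natDegree_lt_card_of_eval_eq_zero _ hinj hPf ?_)
    rw [hcard]
    exact natDegree_lt_natDegree hne (degree_modByMonic_lt P hf)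
  have := hf.finite_adjoinRoot
  refine ⟨hinj', ?_⟩
  refine (LinearMap.injective_iff_surjective_of_finrank_eq_finrank
    (f := (evalAtRoots hρ).toLinearMap) ?_).mp hinj'
  rw [(powerBasis' hf).finrank, powerBasis'_dim, Module.finrank_fintype_fun_eq_card, hcard]

theorem trace_eq_sum_evalAtRoots [Fintype ι] (hρ : ∀ i, f.IsRoot (ρ i)) (hf : f.Monic)
    (hinj : Function.Injective ρ) (hcard : Fintype.card ι = f.natDegree) (x : AdjoinRoot f) :
    Algebra.trace K (AdjoinRoot f) x = ∑ i, evalAtRoots hρ x i := by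
  rw [← Algebra.trace_eq_of_algEquiv
    (AlgEquiv.ofBijective _ (evalAtRoots_bijective hρ hf hinj hcard)), Algebra.trace_pi_eq_sum]
  rfl

theorem discr_eq_det_vandermonde_sq {ρ : Fin f.natDegree → K} (hρ : ∀ i, f.IsRoot (ρ i))
    (hf : f.Monic) (hinj : Function.Injective ρ) :
    discr f = (Matrix.vandermonde ρ).det ^ 2 := by
  have hgram : Algebra.traceMatrix K (fun i : Fin f.natDegree => root f ^ (i : ℕ)) =
      (Matrix.vandermonde ρ).transpose * Matrix.vandermonde ρ := by
    ext i j
    rw [Algebra.traceMatrix_apply, Algebra.traceForm_apply,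
      trace_eq_sum_evalAtRoots hρ hf hinj (Fintype.card_fin _), Matrix.mul_apply]
    simp [← mk_X, ← map_mul, ← map_pow, evalAtRoots_mk]
  rw [discr, Algebra.discr_def, hgram, Matrix.det_mul, Matrix.det_transpose, sq]

theorem discr_ne_zero_of_separable (hf : f.Monic) (hsep : f.Separable) : discr f ≠ 0 := by
  let Ω := AlgebraicClosure K
  let fΩ := f.map (algebraMap K Ω)
  have hcard : Fintype.card (fΩ.rootSet Ω) = fΩ.natDegree :=
    card_rootSet_eq_natDegree hsep.map (IsAlgClosed.splits _)
  let ρ : Fin fΩ.natDegree → Ω := fun i => (Fintype.equivFinOfCardEq hcard).symm i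
  have hρ : ∀ i, fΩ.IsRoot (ρ i) := fun i =>
    (mem_rootSet.mp ((Fintype.equivFinOfCardEq hcard).symm i).2).2
  have hinj : Function.Injective ρ :=
    Subtype.val_injective.comp (Fintype.equivFinOfCardEq hcard).symm.injective
  intro hzero
  have hzeroΩ : discr fΩ = 0 := by rw [← map_discr _ hf, hzero, map_zero]
  rw [discr_eq_det_vandermonde_sq hρ (hf.map _) hinj] at hzeroΩ
  exact Matrix.det_vandermonde_ne_zero_iff.mpr hinj (pow_eq_zero_iff two_ne_zero |>.mp hzeroΩ)

end SplitSeparable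

theorem isUnit_discr_of_separable_map_residue {R : Type*} [CommRing R] [IsLocalRing R]
    {g : R[X]} (hg : g.Monic) (hsep : (g.map (IsLocalRing.residue R)).Separable) :
    IsUnit (discr g) := by
  rw [← IsLocalRing.residue_ne_zero_iff_isUnit, map_discr _ hg]
  exact discr_ne_zero_of_separable (hg.map _) hsep

end AdjoinRoot

theorem integralClosure_eq_adjoin_of_isUnit_discr_minpoly {A k M : Type*}
    [CommRing A] [IsDomain A] [IsIntegrallyClosed A] [Field k] [Algebra A k] [IsFractionRing A k]
    [Field M] [Algebra k M] [FiniteDimensional k M] [Algebra.IsSeparable k M]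
    [Algebra A M] [IsScalarTower A k M] {α : M} (hα : IsIntegral A α)
    (hgen : IntermediateField.adjoin k {α} = ⊤) (hdiscr : IsUnit (AdjoinRoot.discr (minpoly A α))) :
    integralClosure A M = Algebra.adjoin A {α} := by
  have hαk : IsIntegral k α := hα.tower_top
  let pb := PowerBasis.ofAdjoinEqTop hαk (Algebra.adjoin_eq_top_of_primitive_element
    hαk.isAlgebraic hgen)
  let e : AdjoinRoot (minpoly k α) ≃ₐ[k] M := AdjoinRoot.equiv' _ pb
    (by rw [AdjoinRoot.aeval_eq]; exact AdjoinRoot.mk_self) (minpoly.aeval k α)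
  have he : e (AdjoinRoot.root _) = α := AdjoinRoot.liftAlgHom_root _ _ _ (minpoly.aeval k α)
  have hpb : Algebra.discr k pb.basis = algebraMap A k (AdjoinRoot.discr (minpoly A α)) := by
    rw [AdjoinRoot.map_discr _ (minpoly.monic hα),
      ← minpoly.isIntegrallyClosed_eq_field_fractions' k hα, AdjoinRoot.discr,
      Algebra.discr_eq_discr_of_algEquiv _ e]
    congr 1
    ext i
    show pb.basis i = e (AdjoinRoot.root _ ^ (i : ℕ))
    rw [pb.basis_eq_pow, map_pow, he]
    rfl
  refine le_antisymm (fun z hz => ?_) (Algebra.adjoin_le (Set.singleton_subset_iff.mpr hα))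
  have hmem : Algebra.discr k pb.basis • z ∈ Algebra.adjoin A {α} :=
    Algebra.discr_mul_isIntegral_mem_adjoin k (B := pb) hα hz
  rw [hpb, algebraMap_smul] at hmem
  obtain ⟨u, hu⟩ := hdiscr.exists_left_inv
  simpa [smul_smul, hu] using Subalgebra.smul_mem _ hmem u

theorem stmt11_general (A : Type) [CommRing A] [IsDomain A] [IsDiscreteValuationRing A]
    (k : Type) [Field k] [Algebra A k] [IsFractionRing A k]
    (M : Type) [Field M] [Algebra k M] [FiniteDimensional k M] [Algebra.IsSeparable k M]
    [Algebra A M] [IsScalarTower A k M]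
    (α : integralClosure A M)
    (hgen : IntermediateField.adjoin k {(α : M)} = ⊤)
    (hsep : ((minpoly A (α : M)).map
        (Ideal.Quotient.mk (IsLocalRing.maximalIdeal A))).Separable) :
    integralClosure A M = Algebra.adjoin A {(α : M)} :=
  integralClosure_eq_adjoin_of_isUnit_discr_minpoly α.2 hgen
    (AdjoinRoot.isUnit_discr_of_separable_map_residue (minpoly.monic α.2) hsep)

theorem stmt11 (A : Type) [CommRing A] [IsDomain A] [IsDiscreteValuationRing A]
    [IsAdicComplete (IsLocalRing.maximalIdeal A) A]
    (k : Type) [Field k] [Algebra A k] [IsFractionRing A k]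
    (M : Type) [Field M] [Algebra k M] [FiniteDimensional k M] [Algebra.IsSeparable k M]
    [Algebra A M] [IsScalarTower A k M]
    (hunram : ∀ 𝔪 : Ideal (integralClosure A M), 𝔪.IsMaximal →
      Ideal.ramificationIdx'
        (IsLocalRing.maximalIdeal A) 𝔪 = 1)
    (α : integralClosure A M)
    (hgen : IntermediateField.adjoin k {(α : M)} = ⊤)
    (hsep : ((minpoly A (α : M)).map
        (Ideal.Quotient.mk (IsLocalRing.maximalIdeal A))).Separable) :
    integralClosure A M = Algebra.adjoin A {(α : M)} :=
  stmt11_general A k M α hgen hsep
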